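/- arXiv:2301.07413 — 2 statements merged into one kernel-verified Lean document; each statement's English description precedes it below -/
import Mathlib

section
/- Assume Martin's axiom and the negation of the continuum hypothesis, and let 𝒜 be a T₀-family. Then the partial order ℙ of finite subsets p of ω₁ such that all elements of 𝒜 contained in p are singletons or empty, ordered by reverse inclusion, is not c.c.c.; consequently there exists an uncountable family of finite subsets of ω₁, none containing a pair from 𝒜, such that the union of any two distinct members contains a pair from 𝒜. -/
noncomputable section

/-- The set `ω₁` of countable ordinals, as a type. -/
abbrev Omega1 : Type := (Ordinal.omega 1).ToType

/-- `‖x‖_𝒜 = sup_{A ∈ 𝒜} sqrt (Σ_{α ∈ A} x(α)²)`. -/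
def normA (𝒜 : Set (Finset Omega1)) (x : Omega1 → ℝ) : ℝ :=
  sSup {r : ℝ | ∃ A ∈ 𝒜, r = Real.sqrt (∑ α ∈ A, (x α) ^ 2)}

/-- The supremum norm of `x`. -/
def supNorm (x : Omega1 → ℝ) : ℝ :=
  sSup {r : ℝ | ∃ α : Omega1, r = |x α|}

/-- The ℓ₂ norm of a (finitely supported) `x`. -/
def l2Norm (x : Omega1 → ℝ) : ℝ :=
  Real.sqrt (∑ᶠ α : Omega1, (x α) ^ 2)

/-- `𝒜` is a family of finite subsets of `ω₁` closed under subsets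
and containing all singletons. -/
def IsGoodFamily (𝒜 : Set (Finset Omega1)) : Prop :=
  (∀ A ∈ 𝒜, ∀ B : Finset Omega1, B ⊆ A → B ∈ 𝒜) ∧
    ∀ α : Omega1, ({α} : Finset Omega1) ∈ 𝒜

/-- `{{a ξ, b ξ} : ξ < ω₁}` is an (uncountable) family of pairwise disjoint pairs. -/
def PairwiseDisjointPairs (a b : Omega1 → Omega1) : Prop :=
  (∀ ξ : Omega1, a ξ ≠ b ξ) ∧
    ∀ ξ η : Omega1, ξ ≠ η →
      ({a ξ, b ξ} : Set Omega1) ∩ ({a η, b η} : Set Omega1) = ∅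

/-- `𝒜, ℬ` are T-families. -/
def IsTFamilies (𝒜 ℬ : Set (Finset Omega1)) : Prop :=
  (∀ A ∈ 𝒜, ∀ B : Finset Omega1, B ⊆ A → B ∈ 𝒜) ∧
  (∀ A ∈ ℬ, ∀ B : Finset Omega1, B ⊆ A → B ∈ ℬ) ∧
  (∀ α : Omega1, ∃ A ∈ 𝒜, α ∈ A) ∧
  (∀ A ∈ 𝒜 ∩ ℬ, A.card ≤ 1) ∧
  (∀ a b : Omega1 → Omega1, PairwiseDisjointPairs a b → ∀ k : ℕ,
    ∃ s : Finset Omega1, s.card = k ∧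
      (s.image a ∈ 𝒜) ∧ (s.image b ∈ ℬ) ∧
      Set.InjOn a ↑s ∧ Set.InjOn b ↑s)

/-- `𝒜` is a T₀-family: it is part of a pair of T-families. -/
def IsT0Family (𝒜 : Set (Finset Omega1)) : Prop :=
  ∃ ℬ : Set (Finset Omega1), IsTFamilies 𝒜 ℬ

/-- A partial order is c.c.c. if every antichain is countable. -/
def IsCCC (P : Type) [Preorder P] : Prop :=
  ∀ A : Set P, (∀ p ∈ A, ∀ q ∈ A, p ≠ q → ¬ ∃ r : P, r ≤ p ∧ r ≤ q) →
    A.Countable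

/-- Martin's axiom: for every nonempty c.c.c. partial order and every family of
fewer than continuum many dense sets there is a filter meeting them all. -/
def MartinsAxiom : Prop :=
  ∀ (P : Type) (inst : PartialOrder P), Nonempty P →
    (@IsCCC P inst.toPreorder) →
    ∀ D : Set (Set P), Cardinal.mk D < Cardinal.continuum →
      (∀ d ∈ D, ∀ p : P, ∃ q ∈ d, inst.le q p) →
      ∃ G : Set P,
        (∀ p ∈ G, ∀ q ∈ G, ∃ r ∈ G, inst.le r p ∧ inst.le r q) ∧
        (∀ p ∈ G, ∀ q : P, inst.le p q → q ∈ G) ∧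
        ∀ d ∈ D, (G ∩ d).Nonempty

/-- The partial order `ℙ` of finite `𝒜`-free subsets of `ω₁`,
ordered by reverse inclusion. -/
def PP (𝒜 : Set (Finset Omega1)) : Type :=
  {p : Finset Omega1 // ∀ s : Finset Omega1, ↑s ⊆ (↑p : Set Omega1) → s ∈ 𝒜 → s.card ≤ 1}

instance (𝒜 : Set (Finset Omega1)) : Preorder (PP 𝒜) where
  le p q := q.1 ⊆ p.1
  le_refl p := Finset.Subset.refl _
  le_trans p q r h1 h2 := Finset.Subset.trans h2 h1

/-!
Assume ℙ is c.c.c. A maximal antichain of conditions whose one-point extensions are countable is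
countable, so there is a condition `p` such that every `q ≤ p` has uncountably (hence
unboundedly) many one-point extensions. Martin's axiom below `p`, applied to the `ℵ₁` dense
sets "contains an ordinal `≥ α`", yields a directed set of conditions whose union `X` is
unbounded, hence uncountable, and contains no pair from `𝒜`. Splitting `X` into `ℵ₁` disjoint
pairs, the T-family property produces a pair from `𝒜` inside `X`. An uncountable antichain of ℙ
is the required family, as two conditions are incompatible exactly when their union contains a
pair from `𝒜`.
-/

open Cardinal

theorem mk_omega1 : #Omega1 = ℵ₁ := by
  rw [mk_toType, Ordinal.card_omega]

theorem countable_Iio_omega1 (α : Omega1) : (Set.Iio α).Countable := by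
  rw [← le_aleph0_iff_set_countable, ← lt_aleph_one_iff, ← mk_omega1]
  exact mk_Iio_lt α (by rw [mk_omega1, ord_aleph, Ordinal.type_toType])

theorem not_countable_univ_omega1 : ¬ (Set.univ : Set Omega1).Countable := by
  rw [← le_aleph0_iff_set_countable, mk_univ, mk_omega1, ← lt_aleph_one_iff]
  exact lt_irrefl _

theorem exists_le_mem_of_not_countable {X : Set Omega1} (hX : ¬ X.Countable) (α : Omega1) :
    ∃ β ∈ X, α ≤ β := by
  by_contra! h
  exact hX ((countable_Iio_omega1 α).mono h)

theorem not_countable_of_forall_exists_le_mem {X : Set Omega1} (hX : ∀ α, ∃ β ∈ X, α ≤ β) :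
    ¬ X.Countable := by
  intro hc
  refine not_countable_univ_omega1
    ((hc.biUnion (t := fun β _ ↦ Set.Iic β) fun β _ ↦ ?_).mono fun α _ ↦ ?_)
  · exact Set.Iio_insert (a := β) ▸ (countable_Iio_omega1 β).insert β
  · obtain ⟨β, hβX, hαβ⟩ := hX α
    exact Set.mem_biUnion hβX (Set.mem_Iic.2 hαβ)

theorem IsCCC.exists_countable_predense_subset {P : Type} [Preorder P] (hP : IsCCC P)
    {D : Set P} (hD : ∀ p, ∃ q ∈ D, q ≤ p) :
    ∃ M ⊆ D, M.Countable ∧ ∀ p, ∃ m ∈ M, ∃ r, r ≤ p ∧ r ≤ m := by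
  let IsAntichainIn (M : Set P) : Prop :=
    M ⊆ D ∧ ∀ p ∈ M, ∀ q ∈ M, p ≠ q → ¬ ∃ r, r ≤ p ∧ r ≤ q
  obtain ⟨M, hM⟩ := zorn_subset {M | IsAntichainIn M} fun c hc hchain ↦ by
    refine ⟨⋃₀ c, ⟨Set.sUnion_subset fun M hM ↦ (hc hM).1, ?_⟩,
      fun _ ↦ Set.subset_sUnion_of_mem⟩
    rintro p ⟨Mp, hMp, hp⟩ q ⟨Mq, hMq, hq⟩
    obtain h | h := hchain.total hMp hMq
    · exact (hc hMq).2 p (h hp) q hq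
    · exact (hc hMp).2 p hp q (h hq)
  refine ⟨M, hM.1.1, hP M hM.1.2, fun p ↦ ?_⟩
  obtain ⟨q, hqD, hqp⟩ := hD p
  by_contra! hinc
  have hqM : q ∉ M := fun hq ↦ hinc q hq q hqp le_rfl
  have hins : IsAntichainIn (insert q M) := by
    refine ⟨Set.insert_subset hqD hM.1.1, ?_⟩
    rintro a (rfl | ha) b (rfl | hb) hab ⟨r, hra, hrb⟩
    · exact hab rfl
    · exact hinc b hb r (hra.trans hqp) hrb
    · exact hinc a ha r (hrb.trans hqp) hra
    · exact hM.1.2 a ha b hb hab ⟨r, hra, hrb⟩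
  exact hqM (hM.2 hins (Set.subset_insert q M) (Set.mem_insert q M))

theorem MartinsAxiom.exists_directed_below (hMA : MartinsAxiom) {P : Type} [PartialOrder P]
    (hP : IsCCC P) (p : P) (D : Set (Set P)) (hD : #D < 𝔠)
    (hdense : ∀ d ∈ D, ∀ q ≤ p, ∃ r ∈ d, r ≤ q) :
    ∃ G : Set P, (∀ q ∈ G, ∀ q' ∈ G, ∃ r ∈ G, r ≤ q ∧ r ≤ q') ∧ ∀ d ∈ D, (G ∩ d).Nonempty := by
  have hccc : IsCCC (Set.Iic p) := fun A hA ↦ by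
    refine ((hP _ ?_).preimage Subtype.val_injective).mono (Set.subset_preimage_image _ _)
    rintro _ ⟨x, hx, rfl⟩ _ ⟨y, hy, rfl⟩ hxy ⟨r, hrx, hry⟩
    exact hA x hx y hy (ne_of_apply_ne _ hxy) ⟨⟨r, hrx.trans x.2⟩, hrx, hry⟩
  obtain ⟨G, hGdir, -, hGmeet⟩ := hMA (Set.Iic p) inferInstance ⟨⟨p, le_rfl⟩⟩ hccc
    ((Subtype.val ⁻¹' ·) '' D) (mk_image_le.trans_lt hD) (by
      rintro _ ⟨d, hd, rfl⟩ q
      obtain ⟨r, hrd, hrq⟩ := hdense d hd q q.2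
      exact ⟨⟨r, hrq.trans q.2⟩, hrd, hrq⟩)
  refine ⟨Subtype.val '' G, ?_, fun d hd ↦ ?_⟩
  · rintro _ ⟨q, hq, rfl⟩ _ ⟨q', hq', rfl⟩
    obtain ⟨r, hr, hrq, hrq'⟩ := hGdir q hq q' hq'
    exact ⟨r, ⟨r, hr, rfl⟩, hrq, hrq'⟩
  · obtain ⟨q, hqG, hqd⟩ := hGmeet _ ⟨d, hd, rfl⟩
    exact ⟨q, ⟨q, hqG, rfl⟩, hqd⟩

def IsFree (𝒜 : Set (Finset Omega1)) (X : Set Omega1) : Prop :=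
  ∀ s : Finset Omega1, ↑s ⊆ X → s ∈ 𝒜 → s.card ≤ 1

variable {𝒜 : Set (Finset Omega1)}

theorem IsFree.mono {X Y : Set Omega1} (hY : IsFree 𝒜 Y) (h : X ⊆ Y) :
    IsFree 𝒜 X :=
  fun s hs ↦ hY s (hs.trans h)

theorem isFree_singleton (β : Omega1) :
    IsFree 𝒜 ↑({β} : Finset Omega1) := fun s hs _ ↦ by
  simpa using Finset.card_le_card (Finset.coe_subset.1 hs)

theorem IsFree.pair_notMem {X : Set Omega1} (hX : IsFree 𝒜 X) {x y : Omega1} (hx : x ∈ X)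
    (hy : y ∈ X) (hxy : x ≠ y) : ({x, y} : Finset Omega1) ∉ 𝒜 := by
  intro h
  have := hX _ (by simp [Set.insert_subset_iff, hx, hy]) h
  rw [Finset.card_pair hxy] at this
  omega

theorem IsT0Family.exists_pair_mem_of_not_countable (h𝒜 : IsT0Family 𝒜) {X : Set Omega1}
    (hX : ¬ X.Countable) :
    ∃ x ∈ X, ∃ y ∈ X, x ≠ y ∧ ({x, y} : Finset Omega1) ∈ 𝒜 := by
  obtain ⟨ℬ, -, -, -, -, hT⟩ := h𝒜
  have hmk : #(Omega1 × Bool) ≤ #X := by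
    have h2 : (2 : Cardinal) ≤ ℵ₁ := ofNat_lt_aleph0.le.trans (aleph0_le_aleph 1)
    rw [← le_aleph0_iff_set_countable, not_le, ← aleph_one_le_iff] at hX
    rwa [mk_prod, lift_id, lift_id, mk_omega1, mk_bool,
      mul_eq_left (aleph0_le_aleph 1) h2 two_ne_zero]
  obtain ⟨e⟩ := hmk
  have he : Function.Injective fun x ↦ (e x : Omega1) := Subtype.val_injective.comp e.injective
  let a ξ := (e (ξ, false) : Omega1)
  let b ξ := (e (ξ, true) : Omega1)
  have hab : PairwiseDisjointPairs a b := by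
    refine ⟨fun ξ h ↦ by simpa using he h, fun ξ η hξη ↦ ?_⟩
    refine Set.eq_empty_iff_forall_notMem.2 ?_
    rintro z ⟨h₁ | h₁, h₂ | h₂⟩ <;> exact hξη (congrArg Prod.fst (he (h₁.symm.trans h₂)))
  obtain ⟨s, hs, hsa, -, ha, -⟩ := hT a b hab 2
  obtain ⟨ξ, η, hξη, rfl⟩ := Finset.card_eq_two.1 hs
  refine ⟨a ξ, (e _).2, a η, (e _).2, fun h ↦ hξη (ha (by simp) (by simp) h), ?_⟩
  simpa [Finset.image_insert] using hsa

instance : PartialOrder (PP 𝒜) where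
  le_antisymm _ _ h₁ h₂ := Subtype.ext (Finset.Subset.antisymm h₂ h₁)

def PP.extenders (p : PP 𝒜) : Set Omega1 :=
  {β | IsFree 𝒜 ↑(insert β p.1)}

theorem exists_forall_le_not_countable_extenders (hccc : IsCCC (PP 𝒜)) :
    ∃ p : PP 𝒜, ∀ q ≤ p, ¬ q.extenders.Countable := by
  by_contra! h
  obtain ⟨M, hMD, hM, hpre⟩ := hccc.exists_countable_predense_subset
    (D := {q | q.extenders.Countable}) fun p ↦ (h p).imp fun _ ⟨hqp, hq⟩ ↦ ⟨hq, hqp⟩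
  obtain ⟨β, hβ⟩ := (Set.ne_univ_iff_exists_notMem _).1 fun hU ↦
    not_countable_univ_omega1 (hU ▸ hM.biUnion fun m hm ↦ hMD hm)
  obtain ⟨m, hmM, r, hrβ, hrm⟩ := hpre ⟨{β}, isFree_singleton β⟩
  have hβr : β ∈ r.1 := hrβ (Finset.mem_singleton_self β)
  have hmβ : insert β m.1 ⊆ r.1 := Finset.insert_subset hβr hrm
  exact hβ (Set.mem_biUnion hmM (IsFree.mono r.2 (Finset.coe_subset.2 hmβ)))

universe u v

theorem aleph_one_lt_continuum_iff_univ :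
    (ℵ₁ : Cardinal.{u}) < 𝔠 ↔ (ℵ₁ : Cardinal.{v}) < 𝔠 := by
  have hu := @lift_lt.{u, v} ℵ₁ 𝔠
  have hv := @lift_lt.{v, u} ℵ₁ 𝔠
  rw [lift_aleph, Ordinal.lift_one, lift_continuum] at hu hv
  exact hu.symm.trans hv

theorem not_isCCC_PP (hMA : MartinsAxiom) (hCH : (ℵ₁ : Cardinal.{0}) < 𝔠) (h𝒜 : IsT0Family 𝒜) :
    ¬ IsCCC (PP 𝒜) := by
  intro hccc
  obtain ⟨p, hp⟩ := exists_forall_le_not_countable_extenders hccc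
  let D (α : Omega1) : Set (PP 𝒜) := {q | ∃ γ ∈ q.1, α ≤ γ}
  obtain ⟨G, hGdir, hGmeet⟩ := hMA.exists_directed_below hccc p (Set.range D)
    (mk_range_le.trans_lt (mk_omega1 ▸ hCH)) (by
      rintro _ ⟨α, rfl⟩ q hqp
      obtain ⟨β, hβ, hαβ⟩ := exists_le_mem_of_not_countable (hp q hqp) α
      exact ⟨⟨insert β q.1, hβ⟩, ⟨β, Finset.mem_insert_self β q.1, hαβ⟩,
        Finset.subset_insert β q.1⟩)
  have hX : ¬ (⋃ q ∈ G, (q.1 : Set Omega1)).Countable :=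
    not_countable_of_forall_exists_le_mem fun α ↦ by
      obtain ⟨q, hqG, γ, hγ, hαγ⟩ := hGmeet _ ⟨α, rfl⟩
      exact ⟨γ, Set.mem_biUnion hqG hγ, hαγ⟩
  obtain ⟨x, hx, y, hy, hxy, hxy𝒜⟩ := h𝒜.exists_pair_mem_of_not_countable hX
  obtain ⟨q, hqG, hxq⟩ := Set.mem_iUnion₂.1 hx
  obtain ⟨q', hq'G, hyq'⟩ := Set.mem_iUnion₂.1 hy
  obtain ⟨r, -, hrq, hrq'⟩ := hGdir q hqG q' hq'G
  exact IsFree.pair_notMem r.2 (hrq hxq) (hrq' hyq') hxy hxy𝒜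

theorem exists_not_countable_of_not_isCCC_PP
    (h𝒜 : ∀ A ∈ 𝒜, ∀ B : Finset Omega1, B ⊆ A → B ∈ 𝒜) (h : ¬ IsCCC (PP 𝒜)) :
    ∃ F : Set (Finset Omega1), ¬ F.Countable ∧ (∀ p ∈ F, IsFree 𝒜 ↑p) ∧
      ∀ p ∈ F, ∀ q ∈ F, p ≠ q →
        ∃ ξ ∈ p ∪ q, ∃ η ∈ p ∪ q, ξ ≠ η ∧ ({ξ, η} : Finset Omega1) ∈ 𝒜 := by
  simp only [IsCCC, not_forall, exists_prop] at h
  obtain ⟨A, hA, hAunc⟩ := h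
  refine ⟨Subtype.val '' A, fun hc ↦ hAunc ?_, fun _ ⟨p, _, hp⟩ ↦ hp ▸ p.2, ?_⟩
  · exact (hc.preimage Subtype.val_injective).mono (Set.subset_preimage_image _ _)
  rintro _ ⟨p, hp, rfl⟩ _ ⟨q, hq, rfl⟩ hpq
  have hnf : ¬ IsFree 𝒜 ↑(p.1 ∪ q.1) := fun hfree ↦ hA p hp q hq (ne_of_apply_ne _ hpq)
    ⟨⟨p.1 ∪ q.1, hfree⟩, Finset.subset_union_left, Finset.subset_union_right⟩
  simp only [IsFree, not_forall, not_le, exists_prop] at hnf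
  obtain ⟨s, hs, hs𝒜, hcard⟩ := hnf
  obtain ⟨ξ, hξ, η, hη, hξη⟩ := Finset.one_lt_card.1 hcard
  exact ⟨ξ, hs hξ, η, hs hη, hξη,
    h𝒜 s hs𝒜 _ (Finset.insert_subset hξ (Finset.singleton_subset_iff.2 hη))⟩

/-- under MA + ¬CH, for any T₀-family `𝒜` the poset `ℙ` is not c.c.c.;
consequently there is an uncountable family of finite `𝒜`-free sets such that the
union of any two distinct members contains a pair from `𝒜`. -/
theorem stmt9 (hMA : MartinsAxiom)
    (hCH : Cardinal.aleph 1 < Cardinal.continuum)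
    (𝒜 : Set (Finset Omega1)) (h𝒜 : IsT0Family 𝒜) :
    ¬ IsCCC (PP 𝒜) ∧
    ∃ F : Set (Finset Omega1), ¬ F.Countable ∧
      (∀ p ∈ F, ∀ s : Finset Omega1, ↑s ⊆ (↑p : Set Omega1) → s ∈ 𝒜 → s.card ≤ 1) ∧
      ∀ p ∈ F, ∀ q ∈ F, p ≠ q →
        ∃ ξ ∈ p ∪ q, ∃ η ∈ p ∪ q, ξ ≠ η ∧ ({ξ, η} : Finset Omega1) ∈ 𝒜 := by
  have hP := not_isCCC_PP hMA (aleph_one_lt_continuum_iff_univ.1 hCH) h𝒜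
  obtain ⟨_, hhered, -⟩ := h𝒜
  exact ⟨hP, exists_not_countable_of_not_isCCC_PP hhered hP⟩

end
end

section
/- Let 𝒜 be a family of finite subsets of ω₁ closed under subsets and containing all singletons, and suppose (y_n)_{n∈ℕ} ⊆ c_00(ω₁) are norm-one vectors (‖y_n‖_𝒜 = 1) with pairwise disjoint supports such that: (i) each y_n has a subset B_n ⊆ supp(y_n) with B_n ∈ 𝒜 and sqrt(Σ_{α∈B_n} y_n(α)²) ≥ 1/2, and (ii) every finite subset of ⋃_n B_n belongs to 𝒜. Then for all m ∈ ℕ and scalars c_0, …, c_{m−1}, (1/2)·sqrt(Σ_{n<m} c_n²) ≤ ‖Σ_{n<m} c_n y_n‖_𝒜 ≤ sqrt(Σ_{n<m} c_n²). Hence (y_n) is equivalent to the unit vector basis of ℓ₂. -/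
noncomputable section

/-!
Disjointness of the supports makes the squares add up: at every point at most one `y n` is
nonzero, so `∑_{α ∈ A} (∑ c n y n α)² = ∑ c n² ∑_{α ∈ A} y n α²` for every finite `A`. Each inner
sum is at most `‖y n‖_𝒜² = 1` when `A ∈ 𝒜`, giving the upper bound; taking for `A` the union of
`B 0, …, B (m-1)`, which lies in `𝒜`, each inner sum is at least `1/4`, giving the lower bound.
-/

section DisjointSupports

variable {ι α : Type*} {s : Finset ι} {y : ι → α → ℝ}

theorem sq_sum_smul_apply_of_pairwiseDisjoint
    (hdisj : (s : Set ι).PairwiseDisjoint fun n => Function.support (y n))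
    (c : ι → ℝ) (a : α) :
    (∑ n ∈ s, c n • y n) a ^ 2 = ∑ n ∈ s, c n ^ 2 * y n a ^ 2 := by
  rw [Finset.sum_apply]
  by_cases h : ∃ n ∈ s, y n a ≠ 0
  · obtain ⟨n, hn, hna⟩ := h
    have hvanish : ∀ k ∈ s, k ≠ n → y k a = 0 := fun k hk hkn =>
      by_contra fun hka => Set.disjoint_left.1 (hdisj hk hn hkn) hka hna
    rw [Finset.sum_eq_single_of_mem n hn fun k hk hkn => by simp [hvanish k hk hkn],
      Finset.sum_eq_single_of_mem n hn fun k hk hkn => by simp [hvanish k hk hkn]]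
    simp only [Pi.smul_apply, smul_eq_mul, mul_pow]
  · push Not at h
    rw [Finset.sum_eq_zero fun k hk => by simp [h k hk],
      Finset.sum_eq_zero fun k hk => by simp [h k hk]]
    norm_num

theorem sum_sq_sum_smul_of_pairwiseDisjoint
    (hdisj : (s : Set ι).PairwiseDisjoint fun n => Function.support (y n))
    (c : ι → ℝ) (A : Finset α) :
    ∑ a ∈ A, (∑ n ∈ s, c n • y n) a ^ 2 = ∑ n ∈ s, c n ^ 2 * ∑ a ∈ A, y n a ^ 2 := by
  simp_rw [sq_sum_smul_apply_of_pairwiseDisjoint hdisj, Finset.mul_sum]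
  exact Finset.sum_comm

theorem sum_sq_sum_smul_le_of_pairwiseDisjoint
    (hdisj : (s : Set ι).PairwiseDisjoint fun n => Function.support (y n))
    (c : ι → ℝ) {A : Finset α} (hy : ∀ n ∈ s, ∑ a ∈ A, y n a ^ 2 ≤ 1) :
    ∑ a ∈ A, (∑ n ∈ s, c n • y n) a ^ 2 ≤ ∑ n ∈ s, c n ^ 2 := by
  rw [sum_sq_sum_smul_of_pairwiseDisjoint hdisj]
  exact Finset.sum_le_sum fun n hn => mul_le_of_le_one_right (sq_nonneg _) (hy n hn)

theorem mul_sum_sq_le_sum_sq_biUnion_of_pairwiseDisjoint [DecidableEq α]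
    (hdisj : (s : Set ι).PairwiseDisjoint fun n => Function.support (y n))
    (c : ι → ℝ) {B : ι → Finset α} {δ : ℝ} (hB : ∀ n ∈ s, δ ≤ ∑ a ∈ B n, y n a ^ 2) :
    δ * ∑ n ∈ s, c n ^ 2 ≤ ∑ a ∈ s.biUnion B, (∑ n ∈ s, c n • y n) a ^ 2 := by
  rw [sum_sq_sum_smul_of_pairwiseDisjoint hdisj, Finset.mul_sum]
  refine Finset.sum_le_sum fun n hn => ?_
  calc δ * c n ^ 2 ≤ c n ^ 2 * ∑ a ∈ B n, y n a ^ 2 := by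
        rw [mul_comm]; exact mul_le_mul_of_nonneg_left (hB n hn) (sq_nonneg _)
    _ ≤ c n ^ 2 * ∑ a ∈ s.biUnion B, y n a ^ 2 :=
        mul_le_mul_of_nonneg_left (Finset.sum_le_sum_of_subset_of_nonneg
          (Finset.subset_biUnion_of_mem B hn) fun _ _ _ => sq_nonneg _) (sq_nonneg _)

end DisjointSupports

section NormA

variable {𝒜 : Set (Finset Omega1)} {x : Omega1 → ℝ}

theorem normA_le_sqrt {C : ℝ} (hC : ∀ A ∈ 𝒜, ∑ α ∈ A, x α ^ 2 ≤ C) :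
    normA 𝒜 x ≤ Real.sqrt C := by
  refine Real.sSup_le ?_ (Real.sqrt_nonneg _)
  rintro r ⟨A, hA, rfl⟩
  exact Real.sqrt_le_sqrt (hC A hA)

theorem sqrt_sum_sq_le_normA {C : ℝ} (hC : ∀ A ∈ 𝒜, ∑ α ∈ A, x α ^ 2 ≤ C)
    {A : Finset Omega1} (hA : A ∈ 𝒜) : Real.sqrt (∑ α ∈ A, x α ^ 2) ≤ normA 𝒜 x := by
  refine le_csSup ⟨Real.sqrt C, ?_⟩ ⟨A, hA, rfl⟩
  rintro r ⟨A', hA', rfl⟩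
  exact Real.sqrt_le_sqrt (hC A' hA')

-- `sSup` of a set that is not bounded above is `0`, so a nonzero norm is a genuine supremum.
theorem sum_sq_le_sq_normA (hx : normA 𝒜 x ≠ 0) {A : Finset Omega1} (hA : A ∈ 𝒜) :
    ∑ α ∈ A, x α ^ 2 ≤ normA 𝒜 x ^ 2 := by
  have hbdd : BddAbove {r : ℝ | ∃ A ∈ 𝒜, r = Real.sqrt (∑ α ∈ A, x α ^ 2)} := by
    by_contra h
    exact hx (Real.sSup_of_not_bddAbove h)
  exact (Real.sqrt_le_iff.1 (le_csSup hbdd ⟨A, hA, rfl⟩)).2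

end NormA

theorem stmt13_general (𝒜 : Set (Finset Omega1))
    (y : ℕ → Omega1 → ℝ)
    (hdisj : ∀ n m : ℕ, n ≠ m →
      Disjoint (Function.support (y n)) (Function.support (y m)))
    (hnorm : ∀ n, normA 𝒜 (y n) = 1)
    (B : ℕ → Finset Omega1)
    (hBmass : ∀ n, (1 : ℝ) / 2 ≤ Real.sqrt (∑ α ∈ B n, (y n α) ^ 2))
    (hunion : ∀ s : Finset Omega1,
      (↑s : Set Omega1) ⊆ ⋃ n : ℕ, (↑(B n) : Set Omega1) → s ∈ 𝒜) :
    ∀ (m : ℕ) (c : ℕ → ℝ),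
      (1 / 2) * Real.sqrt (∑ n ∈ Finset.range m, (c n) ^ 2) ≤
          normA 𝒜 (∑ n ∈ Finset.range m, c n • y n) ∧
        normA 𝒜 (∑ n ∈ Finset.range m, c n • y n) ≤
          Real.sqrt (∑ n ∈ Finset.range m, (c n) ^ 2) := by
  intro m c
  have hdisj' : (Finset.range m : Set ℕ).PairwiseDisjoint fun n => Function.support (y n) :=
    fun n _ k _ hnk => hdisj n k hnk
  have hupper : ∀ A ∈ 𝒜, ∑ α ∈ A, (∑ n ∈ Finset.range m, c n • y n) α ^ 2 ≤
      ∑ n ∈ Finset.range m, c n ^ 2 := fun A hA =>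
    sum_sq_sum_smul_le_of_pairwiseDisjoint hdisj' c fun n _ => by
      simpa [hnorm n] using sum_sq_le_sq_normA (x := y n) (by simp [hnorm n]) hA
  have hA : (Finset.range m).biUnion B ∈ 𝒜 := hunion _ <| by
    simpa using fun n _ => Set.subset_iUnion (fun n => (B n : Set Omega1)) n
  have hmass : ∀ n ∈ Finset.range m, 1 / 4 ≤ ∑ α ∈ B n, y n α ^ 2 := fun n _ =>
    (Real.le_sqrt (by norm_num) (Finset.sum_nonneg fun _ _ => sq_nonneg _)).1 (hBmass n)
      |>.trans_eq' (by norm_num)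
  refine ⟨?_, normA_le_sqrt hupper⟩
  calc 1 / 2 * Real.sqrt (∑ n ∈ Finset.range m, c n ^ 2)
      = Real.sqrt (1 / 4 * ∑ n ∈ Finset.range m, c n ^ 2) := by
        rw [Real.sqrt_mul (by norm_num), show (1 / 4 : ℝ) = (1 / 2) ^ 2 by norm_num,
          Real.sqrt_sq (by norm_num)]
    _ ≤ _ := Real.sqrt_le_sqrt
        (mul_sum_sq_le_sum_sq_biUnion_of_pairwiseDisjoint hdisj' c hmass)
    _ ≤ _ := sqrt_sum_sq_le_normA hupper hA

/-- disjointly supported norm-one vectors `y n` carrying sets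
`B n ∈ 𝒜` of mass `≥ 1/2`, with `⋃ B n` all of whose finite subsets are in `𝒜`,
are 2-equivalent to the unit vector basis of `ℓ₂`. -/
theorem stmt13 (𝒜 : Set (Finset Omega1)) (h𝒜 : IsGoodFamily 𝒜)
    (y : ℕ → Omega1 → ℝ)
    (hfin : ∀ n, (Function.support (y n)).Finite)
    (hdisj : ∀ n m : ℕ, n ≠ m →
      Disjoint (Function.support (y n)) (Function.support (y m)))
    (hnorm : ∀ n, normA 𝒜 (y n) = 1)
    (B : ℕ → Finset Omega1)
    (hBsupp : ∀ n, (↑(B n) : Set Omega1) ⊆ Function.support (y n))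
    (hBA : ∀ n, B n ∈ 𝒜)
    (hBmass : ∀ n, (1 : ℝ) / 2 ≤ Real.sqrt (∑ α ∈ B n, (y n α) ^ 2))
    (hunion : ∀ s : Finset Omega1,
      (↑s : Set Omega1) ⊆ ⋃ n : ℕ, (↑(B n) : Set Omega1) → s ∈ 𝒜) :
    ∀ (m : ℕ) (c : ℕ → ℝ),
      (1 / 2) * Real.sqrt (∑ n ∈ Finset.range m, (c n) ^ 2) ≤
          normA 𝒜 (∑ n ∈ Finset.range m, c n • y n) ∧
        normA 𝒜 (∑ n ∈ Finset.range m, c n • y n) ≤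
          Real.sqrt (∑ n ∈ Finset.range m, (c n) ^ 2) :=
  stmt13_general 𝒜 y hdisj hnorm B hBmass hunion
end
end
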